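/- arXiv:math/0003223 — 4 statements merged into one kernel-verified Lean document; each statement's English description precedes it below -/
import Mathlib

section
/- Let K be a field of characteristic p > 0, V a finite-dimensional K-vector space, and g a K-linear automorphism of V with g^p = 1. Let 0 = W_0 \subseteq W_1 \subseteq ... \subseteq W_t = V be a chain of g-invariant subspaces, and for 1 \le i \le t let g_i be the automorphism induced by g on the quotient F_i = W_i/W_{i-1}. For an automorphism h of order dividing p of a finite-dimensional space U, write n_U(h) for the K-dimension of the range of (h - 1)^{p-1} (the number of Jordan blocks of size p of h). Then n_V(g) \ge \sum_{i=1}^{t} n_{F_i}(g_i). -/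
/-!
Write `F = (g - 1) ^ (p - 1)`. On `W (i+1) ⧸ W i` the map `(g_i - 1) ^ (p - 1)` is the map induced
by `F`, so its range is the image of `F (W (i+1))` modulo `W i`; the part of `F (W (i+1))` killed
by this projection contains `F (W i)`. Rank–nullity gives
`dim F (W i) + n_{F_i}(g_i) ≤ dim F (W (i+1))`, and these inequalities telescope along the
filtration to `∑ n_{F_i}(g_i) ≤ dim F (V) = n_V(g)`.
-/

open LinearMap

theorem Fin.add_sum_le_of_add_le_succ {M : Type*} [AddCommMonoid M] [PartialOrder M]
    [IsOrderedAddMonoid M] {t : ℕ} (a : Fin (t + 1) → M) (s : Fin t → M)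
    (h : ∀ i : Fin t, a i.castSucc + s i ≤ a i.succ) :
    a 0 + ∑ i, s i ≤ a (Fin.last t) := by
  induction t with
  | zero => simp
  | succ t ih =>
    rw [Fin.sum_univ_castSucc, ← add_assoc]
    calc _ ≤ a (Fin.last t).castSucc + s (Fin.last t) :=
          add_le_add_left (ih (fun i ↦ a i.castSucc) _ fun i ↦ h i.castSucc) _
      _ ≤ a (Fin.last (t + 1)) := h (Fin.last t)

section Ring

variable {R M N : Type*} [Ring R] [AddCommGroup M] [Module R M] [AddCommGroup N] [Module R N]

theorem Submodule.le_comap_sub_one {P : Submodule R M} {f : Module.End R M}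
    (h : P ≤ P.comap f) : P ≤ P.comap (f - 1) :=
  fun x hx ↦ by simpa using P.sub_mem (h hx) hx

theorem Submodule.mapQ_sub_one_pow {P : Submodule R M} (f : Module.End R M) (h : P ≤ P.comap f)
    (k : ℕ)
    (h' : P ≤ P.comap ((f - 1) ^ k) := P.le_comap_pow_of_le_comap (le_comap_sub_one h) k) :
    (P.mapQ P f h - 1) ^ k = P.mapQ P ((f - 1) ^ k) h' := by
  rw [P.mapQ_pow (le_comap_sub_one h)]
  congr 1
  exact linearMap_qext _ (by ext; simp)

theorem LinearMap.restrict_sub_one_pow {P : Submodule R M} (f : Module.End R M)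
    (hf : ∀ x ∈ P, f x ∈ P) (k : ℕ)
    (h' : ∀ x ∈ P, ((f - 1) ^ k) x ∈ P :=
      Module.End.pow_apply_mem_of_forall_mem k (Submodule.le_comap_sub_one hf)) :
    (f.restrict hf - 1) ^ k = ((f - 1) ^ k).restrict h' := by
  rw [← Module.End.pow_restrict k (Submodule.le_comap_sub_one hf)]
  rfl

theorem LinearMap.finrank_map_restrict (f : M →ₗ[R] N) {P : Submodule R M} {Q : Submodule R N}
    (hf : ∀ x ∈ P, f x ∈ Q) (S : Submodule R P) :
    Module.finrank R (S.map (f.restrict hf)) = Module.finrank R ((S.map P.subtype).map f) := by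
  rw [← Submodule.finrank_map_subtype_eq, ← Submodule.map_comp, ← Submodule.map_comp,
    subtype_comp_restrict]
  rfl

end Ring

section DivisionRing

variable {K M N : Type*} [DivisionRing K] [AddCommGroup M] [Module K M] [AddCommGroup N]
  [Module K N]

theorem Submodule.finrank_map_mkQ_add_finrank_inf (S Q : Submodule K N) [FiniteDimensional K S] :
    Module.finrank K (S.map Q.mkQ) + Module.finrank K ↥(S ⊓ Q) = Module.finrank K S := by
  have := (Q.mkQ.domRestrict S).finrank_range_add_finrank_ker
  rwa [range_domRestrict, ker_domRestrict, ker_mkQ, ← finrank_map_subtype_eq,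
    map_comap_subtype] at this

theorem Submodule.finrank_range_mapQ_add_finrank_map_le [FiniteDimensional K M] (f : M →ₗ[K] N)
    {P : Submodule K M} {Q : Submodule K N} (h : P ≤ Q.comap f) :
    Module.finrank K (range (P.mapQ Q f h)) + Module.finrank K (P.map f)
      ≤ Module.finrank K (range f) := by
  rw [range_mapQ, ← finrank_map_mkQ_add_finrank_inf (range f) Q]
  gcongr
  exact finrank_mono (le_inf map_le_range (map_le_iff_le_comap.2 h))

theorem Module.End.finrank_map_add_finrank_range_mapQ_sub_one_pow_le [FiniteDimensional K M]
    (g : Module.End K M) {U P : Submodule K M} (hPU : P ≤ U) (hU : ∀ v ∈ U, g v ∈ U)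
    (h : P.comap U.subtype ≤ (P.comap U.subtype).comap (g.restrict hU)) (k : ℕ) :
    Module.finrank K (P.map ((g - 1) ^ k))
        + Module.finrank K (range ((Submodule.mapQ _ _ (g.restrict hU) h - 1) ^ k))
      ≤ Module.finrank K (U.map ((g - 1) ^ k)) := by
  have hmap : Module.finrank K ((P.comap U.subtype).map ((g.restrict hU - 1) ^ k))
      = Module.finrank K (P.map ((g - 1) ^ k)) := by
    rw [restrict_sub_one_pow g hU k, finrank_map_restrict, Submodule.map_comap_subtype,
      inf_eq_right.2 hPU]
  have hrange : Module.finrank K (range ((g.restrict hU - 1) ^ k))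
      = Module.finrank K (U.map ((g - 1) ^ k)) := by
    rw [restrict_sub_one_pow g hU k, range_eq_map, finrank_map_restrict,
      Submodule.map_subtype_top]
  have hrank := Submodule.finrank_range_mapQ_add_finrank_map_le ((g.restrict hU - 1) ^ k)
    (Submodule.le_comap_pow_of_le_comap _ (Submodule.le_comap_sub_one h) k)
  rw [Submodule.mapQ_sub_one_pow]
  omega

end DivisionRing

/-- Inequality (1) of the paper: if `g` is an automorphism of order dividing `p` of a
finite-dimensional vector space `V` over a field of characteristic `p`, and
`0 = W 0 ⊆ W 1 ⊆ ⋯ ⊆ W t = V` is a chain of `g`-invariant subspaces, then the number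
of Jordan blocks of size `p` of `g` (the dimension of the range of `(g - 1)^(p-1)`)
is at least the sum over the successive quotients `F i = W (i+1) ⧸ W i` of the numbers
of Jordan blocks of size `p` of the induced automorphisms. -/
theorem numBlocks_ge_sum_numBlocks_of_filtration
    {K V : Type*} [Field K] [AddCommGroup V] [Module K V] [FiniteDimensional K V]
    (p : ℕ)
    (g : Module.End K V)
    (t : ℕ) (W : Fin (t + 1) → Submodule K V) (hmono : Monotone W)
    (htop : W (Fin.last t) = ⊤)
    (hinv : ∀ i, ∀ v ∈ W i, g v ∈ W i) :
    Module.finrank K (LinearMap.range ((g - 1) ^ (p - 1)))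
      ≥ ∑ i : Fin t,
          Module.finrank K (LinearMap.range
            ((Submodule.mapQ ((W i.castSucc).comap (W i.succ).subtype)
                ((W i.castSucc).comap (W i.succ).subtype)
                (g.restrict (hinv i.succ))
                (by
                  intro x hx
                  simp only [Submodule.mem_comap, LinearMap.restrict_coe_apply] at hx ⊢
                  exact hinv i.castSucc _ hx)
              - 1) ^ (p - 1))) := by
  refine le_add_self.trans <| (Fin.add_sum_le_of_add_le_succ
    (fun i ↦ Module.finrank K ((W i).map ((g - 1) ^ (p - 1)))) _ fun i ↦ ?_).trans ?_
  · exact Module.End.finrank_map_add_finrank_range_mapQ_sub_one_pow_le g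
      (hmono (Fin.castSucc_le_succ i)) (hinv i.succ) _ (p - 1)
  · rw [htop, Submodule.map_top]
end

section
/- Let K be a field of characteristic p > 0, let V and W be nonzero finite-dimensional K-vector spaces, let g be a K-linear automorphism of V with g^p = 1 and (g - 1)^{p-1} \ne 0 (i.e., g has at least one Jordan block of size p), and let h be a K-linear automorphism of W with h^p = 1. Then the automorphism g \otimes h of V \otimes_K W satisfies: the K-dimension of the range of (g \otimes h - 1)^{p-1} is at least dim_K W. Equivalently, g \otimes h has at least dim_K W Jordan blocks of size p. -/
open LinearMap TensorProduct

/-!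
In characteristic `p` one has `(x - 1) ^ (p - 1) = ∑ k < p, x ^ k`, so
`(g ⊗ h - 1) ^ (p - 1) = ∑ k < p, g ^ k ⊗ h ^ k`. Choose `v` and a functional `f` with
`f (∑ k < p, g ^ k v) = 1`. Applying `(g ⊗ h - 1) ^ (p - 1)` to `v ⊗ w` and contracting the
first factor with `f` gives the endomorphism `∑ k < p, f (g ^ k v) • h ^ k` of `W`. Its
coefficients sum to `1` and `h - 1` is nilpotent, so it is invertible; hence `W` embeds into
the range of `(g ⊗ h - 1) ^ (p - 1)`.
-/

open Polynomial in
theorem Polynomial.X_sub_one_pow_pred_eq_sum_X_pow {K : Type*} [Field K] (p : ℕ)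
    [hp : Fact p.Prime] [CharP K p] : (X - 1 : K[X]) ^ (p - 1) = ∑ k ∈ Finset.range p, X ^ k := by
  have hp1 : p - 1 + 1 = p := Nat.sub_add_cancel hp.out.one_le
  refine mul_left_cancel₀ (X_sub_C_ne_zero (1 : K)) ?_
  rw [C_1, ← pow_succ', hp1, sub_pow_char, one_pow, mul_comm, geom_sum_mul]

theorem sub_one_pow_pred_eq_sum_pow (K : Type*) {A : Type*} [Field K] [Ring A] [Algebra K A]
    (p : ℕ) [Fact p.Prime] [CharP K p] (a : A) :
    (a - 1) ^ (p - 1) = ∑ k ∈ Finset.range p, a ^ k := by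
  simpa using
    congrArg (Polynomial.aeval a) (Polynomial.X_sub_one_pow_pred_eq_sum_X_pow (K := K) p)

theorem isUnit_sum_smul_pow_of_isNilpotent_sub_one {R A : Type*} [CommRing R] [Ring A]
    [Algebra R A] {a : A} (ha : IsNilpotent (a - 1)) (s : Finset ℕ) (c : ℕ → R)
    (hc : IsUnit (∑ k ∈ s, c k)) :
    IsUnit (∑ k ∈ s, c k • a ^ k) := by
  have hterm (k : ℕ) :
      c k • a ^ k = (c k • ∑ i ∈ Finset.range k, a ^ i) * (a - 1) + c k • 1 := by
    rw [smul_mul_assoc, geom_sum_mul, smul_sub, sub_add_cancel]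
  have hcomm : Commute (∑ k ∈ s, c k • ∑ i ∈ Finset.range k, a ^ i) (a - 1) :=
    Commute.sum_left _ _ _ fun k _ => (Commute.sum_left _ _ _ fun i _ =>
      ((Commute.refl a).sub_right (Commute.one_right a)).pow_left i).smul_left _
  rw [Finset.sum_congr rfl fun k _ => hterm k, Finset.sum_add_distrib, ← Finset.sum_mul,
    ← Finset.sum_smul, ← Algebra.algebraMap_eq_smul_one]
  exact (hcomm.isNilpotent_mul_left ha).isUnit_add_right_of_commute (hc.map _)
    (Algebra.commutes _ _).symm

theorem isNilpotent_sub_one_of_pow_eq_one (K : Type*) {A : Type*} [Field K] [Ring A] [Algebra K A]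
    (p : ℕ) [hp : Fact p.Prime] [CharP K p] {a : A} (ha : a ^ p = 1) : IsNilpotent (a - 1) :=
  ⟨p, by rw [← Nat.sub_add_cancel hp.out.one_le, pow_succ, sub_one_pow_pred_eq_sum_pow K,
    geom_sum_mul, ha, sub_self]⟩

theorem LinearMap.finrank_le_finrank_range_of_isUnit_comp {K M N W : Type*} [Field K]
    [AddCommGroup M] [Module K M] [AddCommGroup N] [Module K N] [AddCommGroup W] [Module K W]
    [FiniteDimensional K N] (T : M →ₗ[K] N) (φ : W →ₗ[K] M) (ρ : N →ₗ[K] W)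
    (h : IsUnit (ρ ∘ₗ T ∘ₗ φ)) : Module.finrank K W ≤ Module.finrank K (range T) := by
  have hinj : Function.Injective (T ∘ₗ φ) :=
    .of_comp (f := ρ) ((Module.End.isUnit_iff _).mp h).injective
  calc Module.finrank K W = Module.finrank K (range (T ∘ₗ φ)) :=
        (finrank_range_of_inj hinj).symm
    _ ≤ Module.finrank K (range T) := Submodule.finrank_mono (range_comp_le_range φ T)

theorem TensorProduct.lid_comp_rTensor_comp_sum_map_comp_mk {K V W ι : Type*} [Field K]
    [AddCommGroup V] [Module K V] [AddCommGroup W] [Module K W] (f : Module.Dual K V)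
    (a : ι → Module.End K V) (b : ι → Module.End K W) (s : Finset ι) (v : V) :
    ((TensorProduct.lid K W).toLinearMap ∘ₗ f.rTensor W) ∘ₗ (∑ i ∈ s, map (a i) (b i)) ∘ₗ
      mk K V W v = ∑ i ∈ s, f (a i v) • b i := by
  ext w
  simp

theorem tensor_numBlocks_ge_dim_general
    {K V W : Type*} [Field K] [AddCommGroup V] [Module K V] [AddCommGroup W] [Module K W]
    [FiniteDimensional K V] [FiniteDimensional K W]
    (p : ℕ) (hp : 0 < p) [CharP K p]
    (g : Module.End K V) (hgblock : (g - 1) ^ (p - 1) ≠ 0)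
    (h : Module.End K W) (hh : h ^ p = 1) :
    Module.finrank K (LinearMap.range
        (((TensorProduct.map (g : V →ₗ[K] V) (h : W →ₗ[K] W)) - 1) ^ (p - 1)))
      ≥ Module.finrank K W := by
  have : Fact p.Prime := ⟨(CharP.char_is_prime_or_zero K p).resolve_right hp.ne'⟩
  rw [sub_one_pow_pred_eq_sum_pow K] at hgblock ⊢
  obtain ⟨v, hv⟩ := DFunLike.ne_iff.mp hgblock
  obtain ⟨f, hf⟩ := Module.Projective.exists_dual_eq_one K hv
  refine finrank_le_finrank_range_of_isUnit_comp _ (mk K V W v)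
    ((TensorProduct.lid K W).toLinearMap ∘ₗ f.rTensor W) ?_
  simp only [TensorProduct.map_pow, lid_comp_rTensor_comp_sum_map_comp_mk]
  refine isUnit_sum_smul_pow_of_isNilpotent_sub_one
    (isNilpotent_sub_one_of_pow_eq_one K p hh) _ _ ?_
  rw [← map_sum, ← LinearMap.sum_apply, hf]
  exact isUnit_one

/-- If `g` is an automorphism of order dividing `p` of `V` (char `K = p`) having at
least one Jordan block of size `p` (i.e. `(g-1)^(p-1) ≠ 0`) and `h` is an automorphism
of order dividing `p` of `W`, then `g ⊗ h` has at least `dim W` Jordan blocks of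
size `p`: the rank of `(g ⊗ h - 1)^(p-1)` is at least `dim W`. -/
theorem tensor_numBlocks_ge_dim
    {K V W : Type*} [Field K] [AddCommGroup V] [Module K V] [AddCommGroup W] [Module K W]
    [FiniteDimensional K V] [FiniteDimensional K W] [Nontrivial V] [Nontrivial W]
    (p : ℕ) (hp : 0 < p) [CharP K p]
    (g : Module.End K V) (hg : g ^ p = 1) (hgblock : (g - 1) ^ (p - 1) ≠ 0)
    (h : Module.End K W) (hh : h ^ p = 1) :
    Module.finrank K (LinearMap.range
        (((TensorProduct.map (g : V →ₗ[K] V) (h : W →ₗ[K] W)) - 1) ^ (p - 1)))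
      ≥ Module.finrank K W :=
  tensor_numBlocks_ge_dim_general p hp g hgblock h hh
end

section
/- Let K be a field of characteristic p > 0, let U and V be finite-dimensional K-vector spaces, and let g, h be K-linear automorphisms of U, V respectively with g^p = 1 and h^p = 1. Let a, b be positive integers with (g - 1)^{a-1} \ne 0 on U, (h - 1)^{b-1} \ne 0 on V, and a + b \ge p + 1. Then (g \otimes h - 1)^{p-1} \ne 0 on U \otimes_K V; that is, the automorphism g \otimes h of U \otimes_K V has at least one Jordan block of size p. -/
open LinearMap TensorProduct

private lemma map_end_mul {K U V : Type*} [CommSemiring K] [AddCommMonoid U] [Module K U]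
    [AddCommMonoid V] [Module K V] (f f' : Module.End K U) (g g' : Module.End K V) :
    TensorProduct.map (f : U →ₗ[K] U) (g : V →ₗ[K] V) * TensorProduct.map (f' : U →ₗ[K] U) (g' : V →ₗ[K] V)
      = TensorProduct.map ((f * f' : Module.End K U) : U →ₗ[K] U) ((g * g' : Module.End K V) : V →ₗ[K] V) := by
  rw [Module.End.mul_eq_comp, Module.End.mul_eq_comp, Module.End.mul_eq_comp,
    TensorProduct.map_comp]

private lemma map_end_pow {K U V : Type*} [CommSemiring K] [AddCommMonoid U] [Module K U]
    [AddCommMonoid V] [Module K V] (f : Module.End K U) (g : Module.End K V) (n : ℕ) :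
    (TensorProduct.map (f : U →ₗ[K] U) (g : V →ₗ[K] V)) ^ n
      = TensorProduct.map ((f ^ n : Module.End K U) : U →ₗ[K] U) ((g ^ n : Module.End K V) : V →ₗ[K] V) := by
  induction n with
  | zero => simp only [pow_zero, Module.End.one_eq_id, TensorProduct.map_id]
  | succ n ih => rw [pow_succ, pow_succ, pow_succ, ih, map_end_mul]

/-- If `g`, `h` are automorphisms of order dividing `p` of `U`, `V` (char `K = p`),
`g` has a Jordan block of size at least `a`, `h` has a block of size at least `b`,
and `a + b ≥ p + 1`, then `g ⊗ h` has a Jordan block of size `p`: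
`(g ⊗ h - 1)^(p-1) ≠ 0`. -/
theorem tensor_has_block_of_size_p
    {K U V : Type*} [Field K] [AddCommGroup U] [Module K U] [AddCommGroup V] [Module K V]
    [FiniteDimensional K U] [FiniteDimensional K V]
    (p : ℕ) (hp : 0 < p) [CharP K p]
    (g : Module.End K U) (hg : g ^ p = 1)
    (h : Module.End K V) (hh : h ^ p = 1)
    (a b : ℕ) (ha : 0 < a) (hb : 0 < b)
    (hga : (g - 1) ^ (a - 1) ≠ 0) (hhb : (h - 1) ^ (b - 1) ≠ 0)
    (hab : a + b ≥ p + 1) :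
    ((TensorProduct.map (g : U →ₗ[K] U) (h : V →ₗ[K] V)) - 1) ^ (p - 1) ≠ 0 := by
  classical
  haveI : NeZero p := ⟨hp.ne'⟩
  haveI hfp : Fact p.Prime := CharP.char_is_prime_of_pos K p
  haveI hntU : Nontrivial (Module.End K U) := nontrivial_of_ne _ _ hga
  haveI hntV : Nontrivial (Module.End K V) := nontrivial_of_ne _ _ hhb
  haveI : CharP (Module.End K U) p :=
    charP_of_injective_algebraMap (algebraMap K (Module.End K U)).injective p
  haveI : CharP (Module.End K V) p :=
    charP_of_injective_algebraMap (algebraMap K (Module.End K V)).injective p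
  have hgp : (g - 1) ^ p = 0 := by
    rw [sub_pow_char_of_commute _ (Commute.one_right g), hg, one_pow, sub_self]
  have hhp : (h - 1) ^ p = 0 := by
    rw [sub_pow_char_of_commute _ (Commute.one_right h), hh, one_pow, sub_self]
  -- nilpotency indices
  have hexg : ∃ n, (g - 1) ^ n = 0 := ⟨p, hgp⟩
  have hexh : ∃ n, (h - 1) ^ n = 0 := ⟨p, hhp⟩
  set M : ℕ := Nat.find hexg with hMdef
  set N : ℕ := Nat.find hexh with hNdef
  have hMspec : (g - 1) ^ M = 0 := Nat.find_spec hexg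
  have hNspec : (h - 1) ^ N = 0 := Nat.find_spec hexh
  have haM : a - 1 < M := by
    rw [hMdef, Nat.lt_find_iff]
    exact fun j hj e => hga (pow_eq_zero_of_le hj e)
  have hbN : b - 1 < N := by
    rw [hNdef, Nat.lt_find_iff]
    exact fun j hj e => hhb (pow_eq_zero_of_le hj e)
  have hMle : M ≤ p := Nat.find_le hgp
  have hNle : N ≤ p := Nat.find_le hhp
  set k : ℕ := M - 1 with hkdef
  set l : ℕ := N - 1 with hldef
  have hMpos : 0 < M := lt_of_le_of_lt (Nat.zero_le _) haM
  have hNpos : 0 < N := lt_of_le_of_lt (Nat.zero_le _) hbN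
  have hk : (g - 1) ^ k ≠ 0 := Nat.find_min hexg (by omega)
  have hl : (h - 1) ^ l ≠ 0 := Nat.find_min hexh (by omega)
  have hk1 : (g - 1) ^ (k + 1) = 0 := by
    have : k + 1 = M := by omega
    rw [this]; exact hMspec
  have hl1 : (h - 1) ^ (l + 1) = 0 := by
    have : l + 1 = N := by omega
    rw [this]; exact hNspec
  have hkl : k + l ≥ p - 1 := by omega
  have hkp : k ≤ p - 1 := by omega
  have hlp : l ≤ p - 1 := by omega
  -- choose vectors
  obtain ⟨u, hu⟩ : ∃ u : U, ((g - 1) ^ k) u ≠ 0 := by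
    by_contra hc
    push_neg at hc
    exact hk (LinearMap.ext fun x => hc x)
  obtain ⟨v, hv⟩ : ∃ v : V, ((h - 1) ^ l) v ≠ 0 := by
    by_contra hc
    push_neg at hc
    exact hl (LinearMap.ext fun x => hc x)
  set n : ℕ := p - 1 with hndef
  set s : ℕ := k + l - n with hsdef
  set i0 : ℕ := n - l with hi0def
  have hi0s : i0 + s = k := by omega
  have hni0 : n - i0 = l := by omega
  set u' : U := ((g - 1) ^ s) u with hu'def
  -- the decomposition T = A + B
  set A : Module.End K (U ⊗[K] V) :=
    TensorProduct.map ((g - 1 : Module.End K U) : U →ₗ[K] U) ((1 : Module.End K V) : V →ₗ[K] V) with hAdef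
  set B : Module.End K (U ⊗[K] V) :=
    TensorProduct.map (g : U →ₗ[K] U) ((h - 1 : Module.End K V) : V →ₗ[K] V) with hBdef
  have hcomm : Commute A B := by
    rw [hAdef, hBdef]
    show _ * _ = _ * _
    rw [map_end_mul, map_end_mul, ((Commute.refl g).sub_left (Commute.one_left g)).eq,
      one_mul, mul_one]
  have hT : (TensorProduct.map (g : U →ₗ[K] U) (h : V →ₗ[K] V)) - 1 = A + B := by
    apply TensorProduct.ext'
    intro x y
    simp only [hAdef, hBdef, LinearMap.add_apply, LinearMap.sub_apply, Module.End.one_apply,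
      TensorProduct.map_tmul]
    rw [TensorProduct.sub_tmul, TensorProduct.tmul_sub]
    abel
  have hpow : ∀ i j : ℕ, A ^ i * B ^ j
      = TensorProduct.map (((g - 1) ^ i * g ^ j : Module.End K U) : U →ₗ[K] U)
        (((h - 1) ^ j : Module.End K V) : V →ₗ[K] V) := by
    intro i j
    rw [hAdef, hBdef, map_end_pow, map_end_pow, map_end_mul, one_pow, one_mul]
  -- the commutation of g with (g-1)^t
  have hcg : ∀ i j t : ℕ, ((g - 1) ^ i * g ^ j) * (g - 1) ^ t = g ^ j * (g - 1) ^ (i + t) := by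
    intro i j t
    have c : Commute ((g - 1) ^ i) (g ^ j) :=
      (((Commute.refl g).sub_left (Commute.one_left g)).pow_pow i j)
    rw [c.eq, mul_assoc, ← pow_add]
  -- evaluate the expansion at u' ⊗ v
  have heval : (((TensorProduct.map (g : U →ₗ[K] U) (h : V →ₗ[K] V)) - 1) ^ n) (u' ⊗ₜ[K] v)
      = (n.choose i0) • ((g ^ l * (g - 1) ^ k) u ⊗ₜ[K] ((h - 1) ^ l) v) := by
    rw [hT, hcomm.add_pow]
    rw [LinearMap.coe_sum, Finset.sum_apply]
    rw [Finset.sum_eq_single i0]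
    · have : A ^ i0 * B ^ (n - i0) * (n.choose i0 : Module.End K (U ⊗[K] V))
          = (n.choose i0) • (A ^ i0 * B ^ (n - i0)) := by
        rw [← (Nat.cast_commute (n.choose i0) (A ^ i0 * B ^ (n - i0))).eq, ← nsmul_eq_mul]
      rw [this, LinearMap.smul_apply, hpow, TensorProduct.map_tmul]
      congr 2
      · rw [hu'def, ← Module.End.mul_apply, hcg, hi0s, hni0]
      · rw [hni0]
    · intro i hi hne
      rw [Finset.mem_range] at hi
      have : A ^ i * B ^ (n - i) * (n.choose i : Module.End K (U ⊗[K] V))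
          = (n.choose i) • (A ^ i * B ^ (n - i)) := by
        rw [← (Nat.cast_commute (n.choose i) (A ^ i * B ^ (n - i))).eq, ← nsmul_eq_mul]
      rw [this, LinearMap.smul_apply, hpow, TensorProduct.map_tmul]
      rcases lt_or_gt_of_ne hne with hlt | hgt
      · -- i < i0 : second factor dies
        have h2 : ((h - 1) ^ (n - i) : Module.End K V) = 0 :=
          pow_eq_zero_of_le (by omega) hl1
        rw [h2, LinearMap.zero_apply, TensorProduct.tmul_zero, smul_zero]
      · -- i > i0 : first factor dies
        have h1 : (((g - 1) ^ i * g ^ (n - i)) : Module.End K U) u' = 0 := by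
          rw [hu'def, ← Module.End.mul_apply, hcg]
          have : ((g - 1) ^ (i + s) : Module.End K U) = 0 :=
            pow_eq_zero_of_le (by omega) hk1
          rw [Module.End.mul_apply, this, LinearMap.zero_apply, map_zero]
        rw [h1, TensorProduct.zero_tmul, smul_zero]
    · intro hni
      exact absurd (Finset.mem_range.mpr (by omega)) hni
  -- the surviving vectors are nonzero
  have hw1 : (g ^ l * (g - 1) ^ k) u ≠ 0 := by
    intro e
    apply hu
    have hinv : (g ^ ((p - 1) * l) * g ^ l : Module.End K U) = 1 := by
      rw [← pow_add]
      have : (p - 1) * l + l = p * l := by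
        cases p with
        | zero => omega
        | succ q => rw [Nat.succ_sub_one, Nat.succ_mul]
      rw [this, pow_mul, hg, one_pow]
    have := congrArg (fun z => (g ^ ((p - 1) * l) : Module.End K U) z) e
    simp only [map_zero] at this
    rw [← Module.End.mul_apply, ← mul_assoc, hinv, one_mul] at this
    exact this
  have hw2 : ((h - 1) ^ l) v ≠ 0 := hv
  -- choose dual functionals
  obtain ⟨φ, hφ⟩ : ∃ φ : Module.Dual K U, φ ((g ^ l * (g - 1) ^ k) u) ≠ 0 := by
    by_contra hc
    push_neg at hc
    exact hw1 ((Module.forall_dual_apply_eq_zero_iff K _).mp hc)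
  obtain ⟨ψ, hψ⟩ : ∃ ψ : Module.Dual K V, ψ (((h - 1) ^ l) v) ≠ 0 := by
    by_contra hc
    push_neg at hc
    exact hw2 ((Module.forall_dual_apply_eq_zero_iff K _).mp hc)
  have hchoose : (n.choose i0 : K) ≠ 0 := by
    rw [Ne, CharP.cast_eq_zero_iff K p]
    intro hdvd
    have h1 : n.choose i0 * i0.factorial * (n - i0).factorial = n.factorial :=
      Nat.choose_mul_factorial_mul_factorial (by omega)
    have h2 : p ∣ n.factorial := h1 ▸ Dvd.dvd.mul_right (Dvd.dvd.mul_right hdvd _) _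
    have h3 : p ≤ n := (Nat.Prime.dvd_factorial hfp.out).mp h2
    omega
  -- conclude
  intro hzero
  have : (((TensorProduct.map (g : U →ₗ[K] U) (h : V →ₗ[K] V)) - 1) ^ n) (u' ⊗ₜ[K] v) = 0 := by
    rw [hndef, hzero, LinearMap.zero_apply]
  rw [heval] at this
  set F : U ⊗[K] V →ₗ[K] K :=
    (TensorProduct.lid K K).toLinearMap ∘ₗ TensorProduct.map φ ψ with hFdef
  have hF := congrArg F this
  rw [map_zero, map_nsmul] at hF
  rw [hFdef] at hF
  simp only [LinearMap.comp_apply, TensorProduct.map_tmul, LinearEquiv.coe_toLinearMap,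
    TensorProduct.lid_tmul, smul_eq_mul, nsmul_eq_mul] at hF
  exact (mul_ne_zero hchoose (mul_ne_zero hφ hψ)) hF
end

section
/- Let K be a field of characteristic p > 0, let U and V be nonzero finite-dimensional K-vector spaces, and let g, h be K-linear automorphisms of U, V respectively with g^p = 1 and h^p = 1. For such an automorphism u of a space M, let k_M(u) denote the least positive integer k with (u - 1)^k = 0 on M (the degree of the minimal polynomial of u, equal to the maximal size of a Jordan block of u). Then k_{U \otimes V}(g \otimes h) = min(p, k_U(g) + k_V(h) - 1). -/
/-!
Write `g ⊗ h - 1 = (g - 1) ⊗ h + 1 ⊗ (h - 1)`: a sum of two commuting nilpotents, of classes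
`a = k_U(g)` and `b = k_V(h)`. Its `(a + b - 1)`-st power therefore vanishes, and so does its
`p`-th power because `(g ⊗ h) ^ p = 1` in characteristic `p`. Conversely, for
`n = min p (a + b - 1) - 1`, multiplying the binomial expansion of the `n`-th power by
`(1 ⊗ (h - 1)) ^ (a + b - 2 - n)` kills every term but
`C(n, a - 1) • (g - 1) ^ (a - 1) ⊗ h ^ (a - 1) (h - 1) ^ (b - 1)`,
which is nonzero since `n < p`.
-/

open LinearMap TensorProduct

/-- For a unipotent automorphism `f` of order dividing the characteristic, the degree of
its minimal polynomial: the least positive `k` with `(f - 1)^k = 0`, equal to the maximal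
size of a Jordan block of `f`. -/
noncomputable def unipotentIndex {K M : Type*} [Field K] [AddCommGroup M] [Module K M]
    (f : Module.End K M) : ℕ :=
  sInf {k : ℕ | 0 < k ∧ (f - 1) ^ k = 0}

theorem nilpotencyClass_le_of_pow_eq_zero {R : Type*} [Zero R] [Pow R ℕ] {x : R} {k : ℕ}
    (hx : x ^ k = 0) : nilpotencyClass x ≤ k :=
  Nat.sInf_le hx

theorem Commute.add_pow_mul_pow_eq_of_pow_succ_eq_zero {R : Type*} [Semiring R] {x y : R}
    (hxy : Commute x y) {i j n : ℕ} (hx : x ^ (i + 1) = 0) (hy : y ^ (j + 1) = 0)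
    (hin : i ≤ n) (hnj : n ≤ i + j) :
    (x + y) ^ n * y ^ (i + j - n) = x ^ i * y ^ j * n.choose i := by
  have hterm {k : ℕ} (hk : k ≤ n) : x ^ k * y ^ (n - k) * n.choose k * y ^ (i + j - n)
      = x ^ k * y ^ (i + j - k) * n.choose k := by
    rw [mul_assoc (x ^ k * y ^ (n - k)), Nat.cast_comm, ← mul_assoc, mul_assoc (x ^ k),
      ← pow_add, show n - k + (i + j - n) = i + j - k by omega]
  rw [hxy.add_pow, Finset.sum_mul, Finset.sum_eq_single_of_mem i (by simp; omega), hterm hin,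
    Nat.add_sub_cancel_left]
  intro k hk hki
  rw [hterm (Nat.lt_succ_iff.mp (Finset.mem_range.mp hk))]
  rcases lt_or_gt_of_ne hki with hki | hki
  · rw [pow_eq_zero_of_le (by omega) hy, mul_zero, zero_mul]
  · rw [pow_eq_zero_of_le hki hx, zero_mul, zero_mul]

theorem Nat.cast_choose_ne_zero_of_lt_char {R : Type*} [AddMonoidWithOne R] {p : ℕ} [CharP R p]
    (hp : p.Prime) {n k : ℕ} (hn : n < p) (hk : k ≤ n) : (n.choose k : R) ≠ 0 := by
  rw [Ne, CharP.cast_eq_zero_iff R p]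
  exact fun hdvd => hp.one_lt.ne' ((hp.coprime_choose_of_lt hn hk).eq_one_of_dvd hdvd)

section
variable {K U V : Type*} [Field K] [AddCommGroup U] [Module K U] [AddCommGroup V] [Module K V]

theorem unipotentIndex_eq_nilpotencyClass [Nontrivial U] (f : Module.End K U) :
    unipotentIndex f = nilpotencyClass (f - 1) := by
  refine congrArg sInf (Set.ext fun k => ⟨And.right, fun hk => ⟨Nat.pos_of_ne_zero ?_, hk⟩⟩)
  rintro rfl
  exact one_ne_zero (pow_zero (f - 1) ▸ hk)

theorem Module.End.sub_one_pow_char_eq_zero [Nontrivial U] {p : ℕ} [Fact p.Prime] [CharP K p]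
    {f : Module.End K U} (hf : f ^ p = 1) : (f - 1) ^ p = 0 := by
  have := charP_of_injective_algebraMap' K (A := Module.End K U) p
  rw [sub_pow_char_of_commute p (Commute.one_right f), hf, one_pow, sub_self]

theorem TensorProduct.tmul_ne_zero {u : U} {v : V} (hu : u ≠ 0) (hv : v ≠ 0) :
    u ⊗ₜ[K] v ≠ 0 := by
  obtain ⟨φ, hφ⟩ := Module.Projective.exists_dual_ne_zero K hu
  obtain ⟨ψ, hψ⟩ := Module.Projective.exists_dual_ne_zero K hv
  intro huv
  have := congrArg (fun t => TensorProduct.lid K K (map φ ψ t)) huv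
  simp only [map_tmul, lid_tmul, smul_eq_mul, map_zero] at this
  exact mul_ne_zero hφ hψ this

theorem TensorProduct.map_ne_zero {U' V' : Type*} [AddCommGroup U'] [Module K U']
    [AddCommGroup V'] [Module K V'] {f : U →ₗ[K] U'} {g : V →ₗ[K] V'} (hf : f ≠ 0)
    (hg : g ≠ 0) : map f g ≠ 0 := by
  obtain ⟨u, hu⟩ : ∃ u, f u ≠ 0 := not_forall.mp fun h => hf (LinearMap.ext h)
  obtain ⟨v, hv⟩ : ∃ v, g v ≠ 0 := not_forall.mp fun h => hg (LinearMap.ext h)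
  intro hfg
  exact tmul_ne_zero hu hv (by rw [← map_tmul, hfg, LinearMap.zero_apply])

theorem TensorProduct.map_sub_one (g : Module.End K U) (h : Module.End K V) :
    map g h - 1 = map (g - 1) h + map 1 (h - 1) := by
  rw [sub_eq_iff_eq_add, add_assoc,
    ← (TensorProduct.map_one : map (1 : Module.End K U) (1 : Module.End K V) = 1),
    ← map_add_right, sub_add_cancel, ← map_add_left, sub_add_cancel]

theorem TensorProduct.commute_map_map_one (X : Module.End K U) {Y h : Module.End K V}
    (hYh : Commute h Y) : Commute (map X h) (map 1 Y) := by
  show _ * _ = _ * _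
  rw [← TensorProduct.map_mul, ← TensorProduct.map_mul, mul_one, one_mul, hYh.eq]

theorem TensorProduct.map_add_map_one_pow_eq_zero {X : Module.End K U} {Y h : Module.End K V}
    (hYh : Commute h Y) {a b : ℕ} (hX : X ^ a = 0) (hY : Y ^ b = 0) :
    (map X h + map 1 Y) ^ (a + b - 1) = 0 :=
  (commute_map_map_one X hYh).add_pow_add_eq_zero_of_pow_eq_zero
    (by rw [TensorProduct.map_pow, hX, map_zero_left])
    (by rw [TensorProduct.map_pow, one_pow, hY, map_zero_right])

theorem TensorProduct.map_add_map_one_pow_ne_zero {X : Module.End K U} {Y h : Module.End K V}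
    (hYh : Commute h Y) (hh : IsUnit h) {i j n : ℕ} (hX : X ^ (i + 1) = 0) (hX' : X ^ i ≠ 0)
    (hY : Y ^ (j + 1) = 0) (hY' : Y ^ j ≠ 0) (hin : i ≤ n) (hnj : n ≤ i + j)
    (hchoose : (n.choose i : K) ≠ 0) :
    (map X h + map 1 Y) ^ n ≠ 0 := by
  have key := (commute_map_map_one X hYh).add_pow_mul_pow_eq_of_pow_succ_eq_zero
    (by rw [TensorProduct.map_pow, hX, map_zero_left])
    (by rw [TensorProduct.map_pow, one_pow, hY, map_zero_right]) hin hnj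
  intro h0
  rw [h0, zero_mul, TensorProduct.map_pow, TensorProduct.map_pow, one_pow,
    ← TensorProduct.map_mul, mul_one, ← nsmul_eq_mul', ← Nat.cast_smul_eq_nsmul K,
    eq_comm] at key
  exact smul_ne_zero hchoose (map_ne_zero hX' (by rwa [Ne, (hh.pow i).mul_right_eq_zero])) key

end

theorem unipotentIndex_tensor_general
    {K U V : Type*} [Field K] [AddCommGroup U] [Module K U] [AddCommGroup V] [Module K V]
    [Nontrivial U] [Nontrivial V]
    (p : ℕ) (hp : 0 < p) [CharP K p]
    (g : Module.End K U) (hg : g ^ p = 1)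
    (h : Module.End K V) (hh : h ^ p = 1) :
    unipotentIndex
        ((TensorProduct.map (g : U →ₗ[K] U) (h : V →ₗ[K] V)) : Module.End K (U ⊗[K] V))
      = min p (unipotentIndex g + unipotentIndex h - 1) := by
  have hprime : p.Prime := (CharP.char_is_prime_or_zero K p).resolve_right hp.ne'
  have : Fact p.Prime := ⟨hprime⟩
  have hgp := Module.End.sub_one_pow_char_eq_zero hg
  have hhp := Module.End.sub_one_pow_char_eq_zero hh
  have hNp := Module.End.sub_one_pow_char_eq_zero (f := map g h)
    (by rw [TensorProduct.map_pow, hg, hh, TensorProduct.map_one])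
  obtain ⟨i, hi⟩ := Nat.exists_eq_add_one.mpr (pos_nilpotencyClass_iff.mpr ⟨p, hgp⟩)
  obtain ⟨j, hj⟩ := Nat.exists_eq_add_one.mpr (pos_nilpotencyClass_iff.mpr ⟨p, hhp⟩)
  obtain ⟨hX, hX'⟩ := nilpotencyClass_eq_succ_iff.mp hi
  obtain ⟨hY, hY'⟩ := nilpotencyClass_eq_succ_iff.mp hj
  have hip : i + 1 ≤ p := hi ▸ nilpotencyClass_le_of_pow_eq_zero hgp
  have hhY : Commute h (h - 1) := (Commute.refl h).sub_right (Commute.one_right h)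
  simp only [unipotentIndex_eq_nilpotencyClass, hi, hj]
  rw [map_sub_one] at hNp ⊢
  obtain ⟨n, hn⟩ := Nat.exists_eq_add_one.mpr (show 0 < min p (i + 1 + (j + 1) - 1) by omega)
  rw [hn, nilpotencyClass_eq_succ_iff, ← hn]
  constructor
  · rcases min_choice p (i + 1 + (j + 1) - 1) with hm | hm <;> rw [hm]
    · exact hNp
    · exact map_add_map_one_pow_eq_zero hhY hX hY
  · exact map_add_map_one_pow_ne_zero hhY (IsUnit.of_pow_eq_one hh hp.ne') hX hX' hY hY'
      (by omega) (by omega) (Nat.cast_choose_ne_zero_of_lt_char hprime (by omega) (by omega))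

/-- For automorphisms `g`, `h` of order dividing `p` of nonzero finite-dimensional spaces
`U`, `V` over a field of characteristic `p > 0`, the maximal Jordan block size of
`g ⊗ h` equals `min p (k_U(g) + k_V(h) - 1)`. -/
theorem unipotentIndex_tensor
    {K U V : Type*} [Field K] [AddCommGroup U] [Module K U] [AddCommGroup V] [Module K V]
    [FiniteDimensional K U] [FiniteDimensional K V] [Nontrivial U] [Nontrivial V]
    (p : ℕ) (hp : 0 < p) [CharP K p]
    (g : Module.End K U) (hg : g ^ p = 1)
    (h : Module.End K V) (hh : h ^ p = 1) :
    unipotentIndex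
        ((TensorProduct.map (g : U →ₗ[K] U) (h : V →ₗ[K] V)) : Module.End K (U ⊗[K] V))
      = min p (unipotentIndex g + unipotentIndex h - 1) :=
  unipotentIndex_tensor_general p hp g hg h hh
end
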